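/- Descent-preserving equivalence is compatible with multiplication by inverse J-classes: if A, B are finite multisets of permutations in S_n with equal multisets of descent sets, then for every J ⊆ [n-1], the multisets A·R_J^{-1} and B·R_J^{-1} have equal multisets of descent sets, and likewise R_J^{-1}·A and R_J^{-1}·B have equal multisets of descent sets. -/

import Mathlib

open scoped Classical

/-- Successor in `Fin n` (cyclic, but only used under the guard `i+1 < n`). -/
def finSucc {n : ℕ} (i : Fin n) : Fin n := ⟨((i : ℕ) + 1) % n, Nat.mod_lt _ i.pos⟩

def pDes {n : ℕ} (π : Equiv.Perm (Fin n)) : Finset (Fin n) :=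
  Finset.univ.filter fun i => (i : ℕ) + 1 < n ∧ π (finSucc i) < π i

/-- The inverse `J`-class `R_J^{-1} = {σ : Des σ⁻¹ ⊆ J}`, as a multiset. -/
noncomputable def RinvM (n : ℕ) (J : Finset (Fin n)) : Multiset (Equiv.Perm (Fin n)) :=
  (Finset.univ.filter fun σ : Equiv.Perm (Fin n) => pDes σ⁻¹ ⊆ J).val

/-- Product of multisets of permutations (with multiplicity). -/
def mprod {n : ℕ} (A B : Multiset (Equiv.Perm (Fin n))) : Multiset (Equiv.Perm (Fin n)) :=
  A.bind fun a => B.map fun b => a * b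

/-- The composition `co(J)` of `n` corresponding to `J ⊆ [n-1]`, as a list of parts. -/
def compList (n : ℕ) (J : Finset (Fin n)) : List ℕ :=
  let l := (J.sort (· ≤ ·)).map fun i => (i : ℕ) + 1
  List.zipWith (· - ·) (l ++ [n]) (0 :: l)

/-- `co(J)` as a multiset of parts (so `compM n J = compM n K` means `J ∼ K`). -/
def compM (n : ℕ) (J : Finset (Fin n)) : Multiset ℕ := (compList n J : Multiset ℕ)

/-!
The number of factorizations `π = ρ * μ` with `Des ρ ⊆ K` and `Des μ ⊆ L` depends only on `Des π`.
Indeed, `Des ρ ⊆ K` means that `ρ` increases on every block of positions cut out by `K`, so `ρ` is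
determined by which block of positions each value comes from; and then `μ = ρ⁻¹ * π` has a descent
at `i` exactly when `π i` lies in a later block than `π (i + 1)`, or in the same block with
`i ∈ Des π`. Hence, when `Des π = Des τ`, rearranging `τ * π⁻¹ * ρ` increasingly within blocks is a
bijection between the left factors of `π` and those of `τ`.

The products in `π · R_J⁻¹` (resp. `R_J⁻¹ · π`) with descent set inside `D` are counted by such
factorizations, with `(K, L) = (D, J)` (resp. `(J, D)`); these counts for all `D` determine the
multiset of descent sets, and the theorem follows by summing over `π ∈ A`.
-/

open Finset Equiv

lemma Multiset.eq_of_card_filter_subset_eq {β : Type*} [DecidableEq β] {s t : Multiset (Finset β)}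
    (h : ∀ D, Multiset.card (s.filter (· ⊆ D)) = Multiset.card (t.filter (· ⊆ D))) : s = t := by
  have hsum : ∀ (u : Multiset (Finset β)) (E : Finset β), Multiset.card (u.filter (· ⊆ E)) =
      u.count E + ∑ F ∈ E.powerset.erase E, u.count F := fun u E => by
    rw [← Multiset.sum_count_eq_card (s := E.powerset) (by simp),
      ← add_sum_erase _ _ (mem_powerset_self E)]
    refine congrArg₂ _ (Multiset.count_filter_of_pos subset_rfl) (sum_congr rfl fun F hF => ?_)
    exact Multiset.count_filter_of_pos (Finset.mem_powerset.mp (Finset.mem_of_mem_erase hF))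
  ext E
  induction E using Finset.strongInduction with
  | H E ih =>
    have hlower : ∑ F ∈ E.powerset.erase E, s.count F = ∑ F ∈ E.powerset.erase E, t.count F :=
      sum_congr rfl fun F hF => ih F <| Finset.ssubset_iff_subset_ne.mpr
        ⟨Finset.mem_powerset.mp (Finset.mem_of_mem_erase hF), Finset.ne_of_mem_erase hF⟩
    have := h E
    rw [hsum, hsum, hlower] at this
    omega

lemma Multiset.bind_congr_of_map_eq {α β γ : Type*} {f : α → β} {g : α → Multiset γ}
    (hg : g.FactorsThrough f) {A B : Multiset α} (h : A.map f = B.map f) :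
    A.bind g = B.bind g := by
  obtain ⟨e, rfl⟩ := (Function.factorsThrough_iff g).mp hg
  simp only [Function.comp_def, ← Multiset.bind_map, h]

section

variable {n : ℕ}

lemma finSucc_val {i : Fin n} (h : (i : ℕ) + 1 < n) : ((finSucc i : Fin n) : ℕ) = i + 1 :=
  Nat.mod_eq_of_lt h

lemma covBy_finSucc {i : Fin n} (h : (i : ℕ) + 1 < n) : i ⋖ finSucc i := by
  rw [Fin.covBy_iff, finSucc_val h]
  exact Order.covBy_add_one _

lemma Fin.val_add_one_lt_of_not_isMax {i : Fin n} (hi : ¬IsMax i) : (i : ℕ) + 1 < n := by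
  obtain ⟨j, hij⟩ := not_isMax_iff.mp hi
  have := j.isLt
  rw [Fin.lt_def] at hij
  omega

lemma orderSucc_eq_finSucc {i : Fin n} (hi : ¬IsMax i) : Order.succ i = finSucc i :=
  (covBy_finSucc (Fin.val_add_one_lt_of_not_isMax hi)).succ_eq

lemma mem_pDes {π : Perm (Fin n)} {i : Fin n} :
    i ∈ pDes π ↔ (i : ℕ) + 1 < n ∧ π (finSucc i) < π i := by
  simp [pDes]

/-- Numbers the blocks of positions cut out by `K`: the fibres of `blockIdx K` are the maximal
intervals `{a, …, b}` with `a, …, b - 1 ∉ K`. -/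
def blockIdx (K : Finset (Fin n)) (i : Fin n) : ℕ := #{k ∈ K | k < i}

lemma blockIdx_mono (K : Finset (Fin n)) : Monotone (blockIdx K) := fun _ _ hij =>
  card_le_card (monotone_filter_right _ fun _ _ hk => hk.trans_le hij)

lemma blockIdx_finSucc (K : Finset (Fin n)) {i : Fin n} (h : (i : ℕ) + 1 < n) :
    blockIdx K (finSucc i) = blockIdx K i + if i ∈ K then 1 else 0 := by
  have hlt : ∀ k : Fin n, k < finSucc i ↔ k < i ∨ k = i := fun k => by
    rw [Fin.lt_def, finSucc_val h, ← Fin.val_inj, Fin.lt_def]; omega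
  unfold blockIdx
  split_ifs with hi
  · have hins : {k ∈ K | k < finSucc i} = insert i {k ∈ K | k < i} := by
      ext k; simp only [mem_filter, mem_insert, hlt]; grind
    rw [hins, card_insert_of_notMem (by simp)]
  · congr 1; ext k; simp only [mem_filter, hlt]; grind

lemma lt_finSucc_of_notMem_pDes {π : Perm (Fin n)} {i : Fin n} (h : (i : ℕ) + 1 < n)
    (hi : i ∉ pDes π) : π i < π (finSucc i) := by
  rw [mem_pDes, not_and, not_lt] at hi
  exact (hi h).lt_of_ne (π.injective.ne (covBy_finSucc h).lt.ne)

def IncOnBlocks (K : Finset (Fin n)) (ρ : Perm (Fin n)) : Prop :=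
  ∀ ⦃x y⦄, x < y → blockIdx K x = blockIdx K y → ρ x < ρ y

lemma incOnBlocks_iff_pDes_subset {K : Finset (Fin n)} {ρ : Perm (Fin n)} :
    IncOnBlocks K ρ ↔ pDes ρ ⊆ K := by
  constructor
  · intro hρ i hi
    obtain ⟨hin, hdes⟩ := mem_pDes.mp hi
    by_contra hiK
    exact hdes.not_gt (hρ (covBy_finSucc hin).lt (by simp [blockIdx_finSucc K hin, hiK]))
  · intro hρ x y hxy hb
    have hmono : StrictMonoOn ρ (blockIdx K ⁻¹' {blockIdx K x}) := by
      refine strictMonoOn_of_lt_succ (Set.ordConnected_singleton.preimage_mono (blockIdx_mono K))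
        fun i hi hib hsb => ?_
      have hin := Fin.val_add_one_lt_of_not_isMax hi
      rw [orderSucc_eq_finSucc hi] at hsb ⊢
      refine lt_finSucc_of_notMem_pDes hin fun hdes => ?_
      simp only [Set.mem_preimage, Set.mem_singleton_iff, blockIdx_finSucc K hin, hρ hdes,
        if_true] at hib hsb
      omega
    exact hmono rfl hb.symm hxy

lemma IncOnBlocks.lt_iff {K : Finset (Fin n)} {ρ : Perm (Fin n)} (hρ : IncOnBlocks K ρ)
    {x y : Fin n} :
    x < y ↔ blockIdx K x < blockIdx K y ∨ blockIdx K x = blockIdx K y ∧ ρ x < ρ y := by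
  constructor
  · intro hxy
    rcases (blockIdx_mono K hxy.le).lt_or_eq with hb | hb
    · exact .inl hb
    · exact .inr ⟨hb, hρ hxy hb⟩
  · rintro (hb | ⟨hb, hρxy⟩)
    · exact (blockIdx_mono K).reflect_lt hb
    · rcases lt_trichotomy x y with hxy | rfl | hyx
      · exact hxy
      · exact absurd hρxy (lt_irrefl _)
      · exact absurd (hρ hyx hb.symm) hρxy.asymm

def blockOf (K : Finset (Fin n)) (ρ : Perm (Fin n)) : Fin n → ℕ := blockIdx K ∘ ⇑ρ⁻¹

lemma blockOf_mul (K : Finset (Fin n)) (g ρ : Perm (Fin n)) :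
    blockOf K (g * ρ) = blockOf K ρ ∘ ⇑g⁻¹ := by
  ext v; simp [blockOf]

lemma IncOnBlocks.mem_pDes_inv_mul_iff {K : Finset (Fin n)} {ρ : Perm (Fin n)}
    (hρ : IncOnBlocks K ρ) {π : Perm (Fin n)} {i : Fin n} :
    i ∈ pDes (ρ⁻¹ * π) ↔ (i : ℕ) + 1 < n ∧
      (blockOf K ρ (π (finSucc i)) < blockOf K ρ (π i) ∨
        blockOf K ρ (π (finSucc i)) = blockOf K ρ (π i) ∧ i ∈ pDes π) := by
  simp only [mem_pDes, Perm.mul_apply, blockOf, Function.comp_apply]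
  rw [hρ.lt_iff]
  simp only [← Perm.mul_apply, mul_inv_cancel_left]
  tauto

lemma pDes_inv_mul_eq {K : Finset (Fin n)} {ρ ρ' π τ : Perm (Fin n)} (hρ : IncOnBlocks K ρ)
    (hρ' : IncOnBlocks K ρ') (hb : blockOf K ρ ∘ ⇑π = blockOf K ρ' ∘ ⇑τ)
    (hπτ : pDes π = pDes τ) : pDes (ρ⁻¹ * π) = pDes (ρ'⁻¹ * τ) := by
  ext i
  simp only [hρ.mem_pDes_inv_mul_iff, hρ'.mem_pDes_inv_mul_iff, hπτ,
    ← Function.comp_apply (f := blockOf K ρ), ← Function.comp_apply (f := blockOf K ρ'), hb]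

/-- Rearranges the values of `g` increasingly within each block of `K`. -/
def blockSort (K : Finset (Fin n)) (g : Perm (Fin n)) : Perm (Fin n) :=
  Tuple.sort (blockOf K g)

lemma eq_blockSort_iff {K : Finset (Fin n)} {ρ g : Perm (Fin n)} :
    ρ = blockSort K g ↔ IncOnBlocks K ρ ∧ blockOf K ρ = blockOf K g := by
  have hcomp : ∀ σ : Perm (Fin n), blockOf K σ ∘ ⇑σ = blockIdx K := fun σ => by
    ext; simp [blockOf]
  have hiff : blockOf K g ∘ ⇑ρ = blockIdx K ↔ blockOf K ρ = blockOf K g := by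
    rw [← hcomp ρ]
    exact ⟨fun h => (ρ.surjective.injective_comp_right h).symm, fun h => by rw [h]⟩
  rw [blockSort, Tuple.eq_sort_iff, ← hiff]
  constructor
  · rintro ⟨hmono, hstable⟩
    have hkey : blockOf K g ∘ ⇑ρ = blockIdx K :=
      (Tuple.unique_monotone hmono (by rw [hcomp]; exact blockIdx_mono K)).trans (hcomp g)
    refine ⟨fun x y hxy hb => hstable x y hxy ?_, hkey⟩
    exact (congrFun hkey x).trans (hb.trans (congrFun hkey y).symm)
  · rintro ⟨hρ, hkey⟩
    refine ⟨hkey ▸ blockIdx_mono K, fun x y hxy hb => hρ hxy ?_⟩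
    exact (congrFun hkey x).symm.trans (hb.trans (congrFun hkey y))

lemma incOnBlocks_blockSort (K : Finset (Fin n)) (g : Perm (Fin n)) :
    IncOnBlocks K (blockSort K g) :=
  (eq_blockSort_iff.mp rfl).1

lemma blockOf_blockSort (K : Finset (Fin n)) (g : Perm (Fin n)) :
    blockOf K (blockSort K g) = blockOf K g :=
  (eq_blockSort_iff.mp rfl).2

lemma blockSort_inv_mul_blockSort {K : Finset (Fin n)} {ρ : Perm (Fin n)} (hρ : IncOnBlocks K ρ)
    (g : Perm (Fin n)) : blockSort K (g⁻¹ * blockSort K (g * ρ)) = ρ := by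
  refine (eq_blockSort_iff.mpr ⟨hρ, ?_⟩).symm
  rw [blockOf_mul, blockOf_blockSort, blockOf_mul, inv_inv, Function.comp_assoc, ← Perm.coe_mul,
    inv_mul_cancel, Perm.coe_one, Function.comp_id]

/-- The left factors `ρ` of the factorizations `π = ρ * μ` with `Des ρ ⊆ K` and `Des μ ⊆ L`. -/
def leftFactors (K L : Finset (Fin n)) (π : Perm (Fin n)) : Finset (Perm (Fin n)) :=
  {ρ | pDes ρ ⊆ K ∧ pDes (ρ⁻¹ * π) ⊆ L}

lemma mem_leftFactors {K L : Finset (Fin n)} {π ρ : Perm (Fin n)} :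
    ρ ∈ leftFactors K L π ↔ IncOnBlocks K ρ ∧ pDes (ρ⁻¹ * π) ⊆ L := by
  simp [leftFactors, incOnBlocks_iff_pDes_subset]

lemma blockSort_mem_leftFactors {K L : Finset (Fin n)} {π τ ρ : Perm (Fin n)}
    (hπτ : pDes π = pDes τ) (hρ : ρ ∈ leftFactors K L π) :
    blockSort K (τ * π⁻¹ * ρ) ∈ leftFactors K L τ := by
  rw [mem_leftFactors] at hρ ⊢
  refine ⟨incOnBlocks_blockSort K _, ?_⟩
  rw [← pDes_inv_mul_eq hρ.1 (incOnBlocks_blockSort K _) ?_ hπτ]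
  · exact hρ.2
  · rw [blockOf_blockSort, blockOf_mul, Function.comp_assoc, ← Perm.coe_mul]
    congr 2
    group

lemma card_leftFactors_congr {π τ : Perm (Fin n)} (hπτ : pDes π = pDes τ) (K L : Finset (Fin n)) :
    #(leftFactors K L π) = #(leftFactors K L τ) := by
  have hinv : ∀ {π τ ρ : Perm (Fin n)}, ρ ∈ leftFactors K L π →
      blockSort K (π * τ⁻¹ * blockSort K (τ * π⁻¹ * ρ)) = ρ := fun {π τ ρ} hρ => by
    simpa only [mul_inv_rev, inv_inv] using
      blockSort_inv_mul_blockSort (mem_leftFactors.mp hρ).1 (τ * π⁻¹)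
  exact card_nbij' _ _ (fun _ => blockSort_mem_leftFactors hπτ)
    (fun _ => blockSort_mem_leftFactors hπτ.symm) (fun _ => hinv) (fun _ => hinv)


lemma map_mprod {β : Type*} (f : Perm (Fin n) → β) (A B : Multiset (Perm (Fin n))) :
    (mprod A B).map f = A.bind fun a => B.map fun b => f (a * b) := by
  simp only [mprod, Multiset.map_bind, Multiset.map_map, Function.comp_def]

lemma map_mprod_eq_bind_right {β : Type*} (f : Perm (Fin n) → β) (A B : Multiset (Perm (Fin n))) :
    (mprod A B).map f = B.bind fun b => A.map fun a => f (a * b) := by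
  rw [map_mprod, Multiset.bind_map_comm]

lemma card_filter_rinvM (J : Finset (Fin n)) (p : Perm (Fin n) → Prop) [DecidablePred p] :
    Multiset.card ((RinvM n J).filter p) = #{σ | pDes σ⁻¹ ⊆ J ∧ p σ} := by
  rw [RinvM, ← filter_val, filter_filter]
  rfl

lemma card_filter_map_pDes_mul_rinvM (π : Perm (Fin n)) (J D : Finset (Fin n)) :
    Multiset.card (((RinvM n J).map fun σ => pDes (π * σ)).filter (· ⊆ D)) =
      #(leftFactors D J π) := by
  rw [Multiset.filter_map, Multiset.card_map, card_filter_rinvM]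
  refine card_equiv (Equiv.mulLeft π) fun σ => ?_
  simp [leftFactors, and_comm]

lemma card_filter_map_pDes_rinvM_mul (π : Perm (Fin n)) (J D : Finset (Fin n)) :
    Multiset.card (((RinvM n J).map fun σ => pDes (σ * π)).filter (· ⊆ D)) =
      #(leftFactors J D π) := by
  rw [Multiset.filter_map, Multiset.card_map, card_filter_rinvM]
  refine card_equiv (Equiv.inv _) fun σ => ?_
  simp [leftFactors]

lemma map_pDes_mul_rinvM_congr {π τ : Perm (Fin n)} (hπτ : pDes π = pDes τ) (J : Finset (Fin n)) :
    (RinvM n J).map (fun σ => pDes (π * σ)) = (RinvM n J).map (fun σ => pDes (τ * σ)) :=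
  Multiset.eq_of_card_filter_subset_eq fun D => by
    rw [card_filter_map_pDes_mul_rinvM, card_filter_map_pDes_mul_rinvM,
      card_leftFactors_congr hπτ]

lemma map_pDes_rinvM_mul_congr {π τ : Perm (Fin n)} (hπτ : pDes π = pDes τ) (J : Finset (Fin n)) :
    (RinvM n J).map (fun σ => pDes (σ * π)) = (RinvM n J).map (fun σ => pDes (σ * τ)) :=
  Multiset.eq_of_card_filter_subset_eq fun D => by
    rw [card_filter_map_pDes_rinvM_mul, card_filter_map_pDes_rinvM_mul,
      card_leftFactors_congr hπτ]

end

theorem mult_invariance_general (n : ℕ) (A B : Multiset (Equiv.Perm (Fin n)))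
    (h : A.map pDes = B.map pDes) (J : Finset (Fin n)) :
    (mprod A (RinvM n J)).map pDes = (mprod B (RinvM n J)).map pDes ∧
    (mprod (RinvM n J) A).map pDes = (mprod (RinvM n J) B).map pDes := by
  rw [map_mprod, map_mprod, map_mprod_eq_bind_right, map_mprod_eq_bind_right]
  exact ⟨Multiset.bind_congr_of_map_eq (fun _ _ hπτ => map_pDes_mul_rinvM_congr hπτ J) h,
    Multiset.bind_congr_of_map_eq (fun _ _ hπτ => map_pDes_rinvM_mul_congr hπτ J) h⟩

/-- If `A ≡ B` (equal multisets of descent sets) then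
`A·R_J⁻¹ ≡ B·R_J⁻¹` and `R_J⁻¹·A ≡ R_J⁻¹·B` for every `J ⊆ [n-1]`. -/
theorem mult_invariance (n : ℕ) (A B : Multiset (Equiv.Perm (Fin n)))
    (h : A.map pDes = B.map pDes) (J : Finset (Fin n))
    (hJ : ∀ i ∈ J, (i : ℕ) + 1 < n) :
    (mprod A (RinvM n J)).map pDes = (mprod B (RinvM n J)).map pDes ∧
    (mprod (RinvM n J) A).map pDes = (mprod (RinvM n J) B).map pDes :=
  mult_invariance_general n A B h J
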